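/- arXiv:math/0412318 — 2 statements merged into one kernel-verified Lean document; each statement's English description precedes it below -/
import Mathlib

section
/- Let (C, g, F) be a para-Hermitian vector space, ω(x, y) := g(x, F y), C₊ and C₋ the ±1 eigenspaces of F, and L ⊆ C a maximal isotropic subspace. Then for l ∈ L one has ω(l, l') = 0 for all l' ∈ L if and only if l ∈ (C₊ ∩ L) + (C₋ ∩ L); moreover the sum (C₊ ∩ L) + (C₋ ∩ L) is direct, i.e. (C₊ ∩ L) ∩ (C₋ ∩ L) = {0}. In other words, the kernel of the restriction of ω to L equals (C₊ ∩ L) ⊕ (C₋ ∩ L). -/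
/-- In a para-Hermitian vector space `(C, g, F)` with
`ω(x, y) = g(x, F y)` and eigenspaces `C₊`, `C₋`, and `L` a maximal isotropic subspace:
for `l ∈ L`, `ω(l, ·)` vanishes on `L` iff `l ∈ (C₊ ∩ L) + (C₋ ∩ L)`; moreover this sum
is direct, i.e. `(C₊ ∩ L) ⊓ (C₋ ∩ L) = ⊥`.  Hence `ker (ω|_L) = (C₊ ∩ L) ⊕ (C₋ ∩ L)`. -/
theorem stmt5 {C : Type*} [AddCommGroup C] [Module ℝ C] [FiniteDimensional ℝ C]
    (g : C →ₗ[ℝ] C →ₗ[ℝ] ℝ)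
    (hsymm : ∀ x y : C, g x y = g y x)
    (hnd : ∀ x : C, (∀ y : C, g x y = 0) → x = 0)
    (F : C →ₗ[ℝ] C)
    (hinv : F ∘ₗ F = LinearMap.id)
    (hanti : ∀ x y : C, g (F x) (F y) = - g x y)
    (L : Submodule ℝ C)
    (hiso : ∀ x ∈ L, ∀ y ∈ L, g x y = 0)
    (hmax : ∀ L' : Submodule ℝ C, (∀ x ∈ L', ∀ y ∈ L', g x y = 0) → L ≤ L' → L' = L) :
    (∀ l ∈ L, ((∀ l' ∈ L, g l (F l') = 0) ↔
      l ∈ (Module.End.eigenspace F 1 ⊓ L) ⊔ (Module.End.eigenspace F (-1) ⊓ L))) ∧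
    (Module.End.eigenspace F 1 ⊓ L) ⊓ (Module.End.eigenspace F (-1) ⊓ L) = ⊥ := by
  have hFF : ∀ x : C, F (F x) = x := by
    intro x
    have := LinearMap.congr_fun hinv x
    simpa using this
  constructor
  · intro l hl
    constructor
    · intro hω
      -- `F l` is orthogonal to `L` and isotropic, hence `F l ∈ L` by maximality
      have horth : ∀ y ∈ L, g (F l) y = 0 := by
        intro y hy
        have h := hanti l (F y)
        rw [hFF] at h
        rw [h, hω y hy, neg_zero]
      have hFlFl : g (F l) (F l) = 0 := by
        rw [hanti l l, hiso l hl l hl, neg_zero]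
      have hFlL : F l ∈ L := by
        have hiso' : ∀ x ∈ L ⊔ (ℝ ∙ F l), ∀ y ∈ L ⊔ (ℝ ∙ F l), g x y = 0 := by
          intro x hx y hy
          rw [Submodule.mem_sup] at hx hy
          obtain ⟨a, ha, u, hu, rfl⟩ := hx
          obtain ⟨b, hb, v, hv, rfl⟩ := hy
          rw [Submodule.mem_span_singleton] at hu hv
          obtain ⟨c, rfl⟩ := hu
          obtain ⟨d, rfl⟩ := hv
          have h1 : g a b = 0 := hiso a ha b hb
          have h2 : g (F l) b = 0 := horth b hb
          have h3 : g a (F l) = 0 := by rw [hsymm]; exact horth a ha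
          simp [map_add, map_smul, h1, h2, h3, hFlFl, smul_eq_mul]
        have := hmax (L ⊔ (ℝ ∙ F l)) hiso' le_sup_left
        rw [← this]
        exact Submodule.mem_sup_right (Submodule.mem_span_singleton_self _)
      -- split `l` into eigenvector parts
      set a : C := (1/2 : ℝ) • (l + F l) with ha_def
      set b : C := (1/2 : ℝ) • (l - F l) with hb_def
      have haL : a ∈ L := Submodule.smul_mem _ _ (Submodule.add_mem _ hl hFlL)
      have hbL : b ∈ L := Submodule.smul_mem _ _ (Submodule.sub_mem _ hl hFlL)
      have ha1 : a ∈ Module.End.eigenspace F 1 := by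
        rw [Module.End.mem_eigenspace_iff]
        rw [ha_def, map_smul, map_add, hFF, one_smul, add_comm]
      have hb1 : b ∈ Module.End.eigenspace F (-1) := by
        rw [Module.End.mem_eigenspace_iff]
        rw [hb_def, map_smul, map_sub, hFF,
          show F l - l = (-1 : ℝ) • (l - F l) by rw [neg_smul, one_smul, neg_sub],
          smul_comm]
      have hab : a + b = l := by
        rw [ha_def, hb_def, ← smul_add]
        have : l + F l + (l - F l) = (2 : ℝ) • l := by
          rw [two_smul]; abel
        rw [this, smul_smul]
        norm_num
      rw [← hab]
      exact Submodule.add_mem_sup ⟨ha1, haL⟩ ⟨hb1, hbL⟩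
    · intro hmem l' hl'
      rw [Submodule.mem_sup] at hmem
      obtain ⟨a, ⟨ha1, haL⟩, b, ⟨hb1, hbL⟩, rfl⟩ := hmem
      simp only [SetLike.mem_coe] at ha1 hb1
      rw [Module.End.mem_eigenspace_iff] at ha1 hb1
      have hga : g a (F l') = 0 := by
        have h := hanti a l'
        rw [ha1, one_smul] at h
        rw [h, hiso a haL l' hl', neg_zero]
      have hgb : g b (F l') = 0 := by
        have h := hanti b l'
        rw [hb1] at h
        have : -g b (F l') = -g b l' := by
          rw [← h, neg_smul, one_smul, map_neg, LinearMap.neg_apply, hsymm]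
        have hb0 : g b l' = 0 := hiso b hbL l' hl'
        rw [hb0] at this
        linarith [this]
      rw [map_add, LinearMap.add_apply, hga, hgb, add_zero]
  · rw [Submodule.eq_bot_iff]
    intro x hx
    obtain ⟨⟨hx1, -⟩, hx2, -⟩ := hx
    simp only [SetLike.mem_coe] at hx1 hx2
    rw [Module.End.mem_eigenspace_iff] at hx1 hx2
    rw [hx1, one_smul] at hx2
    have : (2 : ℝ) • x = 0 := by
      rw [two_smul]
      nth_rewrite 1 [hx2]
      simp
    simpa using (smul_eq_zero.mp this).resolve_left (by norm_num)
end

section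
/- Let (C, g, F) be a para-Hermitian vector space, ω(x, y) := g(x, F y), F₊ = (1/2)(id + F), F₋ = (1/2)(id − F), and L ⊆ C a maximal isotropic subspace. Then for all l₁, l₂ ∈ L: ω(l₁, l₂) = 2 g(F₋l₁, F₊l₂) = −2 g(F₊l₁, F₋l₂). Consequently, if l₁', l₂' ∈ L satisfy F₊l₁' = F₊l₁ and F₊l₂' = F₊l₂, then ω(l₁', l₂') = ω(l₁, l₂); so ω induces a well-defined skew-symmetric bilinear form ω₊ on L₊ := F₊(L) with ω₊(F₊l₁, F₊l₂) = ω(l₁, l₂). -/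
/-- The projection `F₊ = (1/2)(id + F)` onto the `+1` eigenspace of an involution `F`. -/
noncomputable def Fplus {C : Type*} [AddCommGroup C] [Module ℝ C] (F : C →ₗ[ℝ] C) :
    C →ₗ[ℝ] C :=
  (1/2 : ℝ) • (LinearMap.id + F)

/-- The projection `F₋ = (1/2)(id − F)` onto the `−1` eigenspace of an involution `F`. -/
noncomputable def Fminus {C : Type*} [AddCommGroup C] [Module ℝ C] (F : C →ₗ[ℝ] C) :
    C →ₗ[ℝ] C :=
  (1/2 : ℝ) • (LinearMap.id - F)

/-- In a para-Hermitian vector space `(C, g, F)` with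
`ω(x, y) = g(x, F y)`, for a maximal isotropic subspace `L` one has
`ω(l₁, l₂) = 2 g(F₋l₁, F₊l₂) = −2 g(F₊l₁, F₋l₂)` for all `l₁, l₂ ∈ L`; consequently
`ω(l₁, l₂)` depends only on `F₊l₁`, `F₊l₂`, and `ω` induces a well-defined
skew-symmetric bilinear form `ω₊` on `L₊ = F₊(L)` with `ω₊(F₊l₁, F₊l₂) = ω(l₁, l₂)`. -/
theorem stmt6 {C : Type*} [AddCommGroup C] [Module ℝ C] [FiniteDimensional ℝ C]
    (g : C →ₗ[ℝ] C →ₗ[ℝ] ℝ)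
    (hsymm : ∀ x y : C, g x y = g y x)
    (hnd : ∀ x : C, (∀ y : C, g x y = 0) → x = 0)
    (F : C →ₗ[ℝ] C)
    (hinv : F ∘ₗ F = LinearMap.id)
    (hanti : ∀ x y : C, g (F x) (F y) = - g x y)
    (L : Submodule ℝ C)
    (hiso : ∀ x ∈ L, ∀ y ∈ L, g x y = 0)
    (hmax : ∀ L' : Submodule ℝ C, (∀ x ∈ L', ∀ y ∈ L', g x y = 0) → L ≤ L' → L' = L) :
    (∀ l₁ ∈ L, ∀ l₂ ∈ L,
      g l₁ (F l₂) = 2 * g (Fminus F l₁) (Fplus F l₂) ∧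
      g l₁ (F l₂) = -2 * g (Fplus F l₁) (Fminus F l₂)) ∧
    (∀ l₁ ∈ L, ∀ l₂ ∈ L, ∀ l₁' ∈ L, ∀ l₂' ∈ L,
      Fplus F l₁' = Fplus F l₁ → Fplus F l₂' = Fplus F l₂ →
        g l₁' (F l₂') = g l₁ (F l₂)) ∧
    (∃ ωp : ↥(Submodule.map (Fplus F) L) →ₗ[ℝ] ↥(Submodule.map (Fplus F) L) →ₗ[ℝ] ℝ,
      (∀ u v, ωp u v = - ωp v u) ∧
      ∀ l₁ : C, ∀ h₁ : l₁ ∈ L, ∀ l₂ : C, ∀ h₂ : l₂ ∈ L,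
        ωp ⟨Fplus F l₁, Submodule.mem_map_of_mem h₁⟩
           ⟨Fplus F l₂, Submodule.mem_map_of_mem h₂⟩ = g l₁ (F l₂)) := by
  -- basic facts
  have hFF : ∀ x : C, F (F x) = x := fun x => congrFun (congrArg DFunLike.coe hinv) x
  have hskewF : ∀ x y : C, g (F x) y = - g x (F y) := by
    intro x y
    have h := hanti x (F y)
    rwa [hFF y] at h
  have hskew : ∀ x y : C, g x (F y) = - g y (F x) := by
    intro x y
    rw [hsymm x (F y), hskewF y x]
  -- part 1
  have part1 : ∀ l₁ ∈ L, ∀ l₂ ∈ L,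
      g l₁ (F l₂) = 2 * g (Fminus F l₁) (Fplus F l₂) ∧
      g l₁ (F l₂) = -2 * g (Fplus F l₁) (Fminus F l₂) := by
    intro l₁ h₁ l₂ h₂
    have h0 : g l₁ l₂ = 0 := hiso l₁ h₁ l₂ h₂
    have hFF0 : g (F l₁) (F l₂) = 0 := by rw [hanti, h0]; ring
    have hflip : g (F l₁) l₂ = - g l₁ (F l₂) := hskewF l₁ l₂
    constructor <;>
    · simp only [Fminus, Fplus, LinearMap.smul_apply, LinearMap.add_apply,
        LinearMap.sub_apply, LinearMap.id_apply, map_smul, map_add, map_sub,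
        LinearMap.smul_apply, LinearMap.add_apply, LinearMap.sub_apply,
        smul_eq_mul, h0, hFF0, hflip]
      ring
  -- part 2
  have part2 : ∀ l₁ ∈ L, ∀ l₂ ∈ L, ∀ l₁' ∈ L, ∀ l₂' ∈ L,
      Fplus F l₁' = Fplus F l₁ → Fplus F l₂' = Fplus F l₂ →
        g l₁' (F l₂') = g l₁ (F l₂) := by
    intro l₁ h₁ l₂ h₂ l₁' h₁' l₂' h₂' e₁ e₂
    have hd₁ : l₁' - l₁ ∈ L := L.sub_mem h₁' h₁
    have hd₂ : l₂' - l₂ ∈ L := L.sub_mem h₂' h₂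
    have hp₁ : Fplus F (l₁' - l₁) = 0 := by rw [map_sub, e₁, sub_self]
    have hp₂ : Fplus F (l₂' - l₂) = 0 := by rw [map_sub, e₂, sub_self]
    have e3 : g (l₁' - l₁) (F l₂') = 0 := by
      have := (part1 (l₁' - l₁) hd₁ l₂' h₂').2
      rw [this, hp₁]; simp
    have e4 : g l₁ (F (l₂' - l₂)) = 0 := by
      have := (part1 l₁ h₁ (l₂' - l₂) hd₂).1
      rw [this, hp₂]; simp
    have e3' : g l₁' (F l₂') = g l₁ (F l₂') := by
      have h := e3
      rw [map_sub, LinearMap.sub_apply] at h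
      linarith
    have e4' : g l₁ (F l₂') = g l₁ (F l₂) := by
      have h := e4
      rw [map_sub, map_sub] at h
      linarith
    rw [e3', e4']
  refine ⟨part1, part2, ?_⟩
  -- part 3
  set Lp := Submodule.map (Fplus F) L with hLp
  have hsurj : Function.Surjective ((Fplus F).restrict
      (fun x hx => Submodule.mem_map_of_mem hx : ∀ x ∈ L, Fplus F x ∈ Lp)) := by
    rintro ⟨y, x, hx, rfl⟩
    exact ⟨⟨x, hx⟩, rfl⟩
  set e : ↥L →ₗ[ℝ] ↥Lp := (Fplus F).restrict
      (fun x hx => Submodule.mem_map_of_mem hx) with he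
  obtain ⟨s, hs⟩ := e.exists_rightInverse_of_surjective (LinearMap.range_eq_top.2 hsurj)
  have hss : ∀ u : ↥Lp, e (s u) = u := fun u => congrFun (congrArg DFunLike.coe hs) u
  have hFps : ∀ u : ↥Lp, Fplus F ((s u : C)) = (u : C) := by
    intro u
    have := hss u
    exact congrArg Subtype.val this
  set j : ↥Lp →ₗ[ℝ] C := L.subtype ∘ₗ s with hj
  refine ⟨(g.compl₂ F).compl₁₂ j j, ?_, ?_⟩
  · intro u v
    simp only [LinearMap.compl₁₂_apply, LinearMap.compl₂_apply]
    exact hskew (j u) (j v)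
  · intro l₁ h₁ l₂ h₂
    simp only [LinearMap.compl₁₂_apply, LinearMap.compl₂_apply]
    apply part2 l₁ h₁ l₂ h₂ (j _) (s _).2 (j _) (s _).2
    · exact hFps _
    · exact hFps _
end
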